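/- Let t > 0. Let A_i ⊆ closedBall(a_i, r_i), B_i ⊆ closedBall(b_i, ρ_i), A_j ⊆ closedBall(a_j, r_j), B_j ⊆ closedBall(b_j, ρ_j) be nonempty subsets of a finite set V ⊆ ℝ^d, and let G be a simple graph on V containing the edge {u, v} with u ∈ A_i and v ∈ B_i. Let x ∈ A_j and y ∈ B_j. Suppose both min(A_i, A_j) + dist(u, v) + min(B_i, B_j) > t·max(A_j, B_j) and min(A_i, B_j) + dist(u, v) + min(B_i, A_j) > t·max(A_j, B_j). Then every walk in G from x to y that traverses the edge {u, v} (in either direction) has length strictly greater than t·dist(x, y); in particular, the edge {u, v} cannot be part of a t-path between x and y. -/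
import Mathlib


/-- The length of a walk in a graph whose vertices are points of a metric space:
the sum of the distances between consecutive vertices. -/
noncomputable def walkLength {α : Type*} [PseudoMetricSpace α] {G : SimpleGraph α} {u v : α}
    (p : G.Walk u v) : ℝ :=
  (p.darts.map (fun e => dist e.toProd.1 e.toProd.2)).sum

lemma walkLength_nil {α : Type*} [PseudoMetricSpace α] {G : SimpleGraph α} {a : α} :
    walkLength (SimpleGraph.Walk.nil : G.Walk a a) = 0 := rfl

lemma walkLength_cons {α : Type*} [PseudoMetricSpace α] {G : SimpleGraph α} {a b c : α}
    (h : G.Adj a b) (p : G.Walk b c) :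
    walkLength (SimpleGraph.Walk.cons h p) = dist a b + walkLength p := rfl

lemma dist_le_walkLength {α : Type*} [PseudoMetricSpace α] {G : SimpleGraph α} {a b : α}
    (p : G.Walk a b) : dist a b ≤ walkLength p := by
  induction p with
  | nil => simp [walkLength_nil]
  | cons h p ih =>
    rw [walkLength_cons]
    calc dist _ _ ≤ dist _ _ + dist _ _ := dist_triangle _ _ _
    _ ≤ _ := by linarith

lemma dart_split {α : Type*} [PseudoMetricSpace α] {G : SimpleGraph α} {a b : α}
    (p : G.Walk a b) (d : G.Dart) (hd : d ∈ p.darts) :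
    dist a d.toProd.1 + dist d.toProd.1 d.toProd.2 + dist d.toProd.2 b ≤ walkLength p := by
  induction p with
  | nil => simp at hd
  | @cons a c b h p ih =>
    rw [SimpleGraph.Walk.darts_cons, List.mem_cons] at hd
    rw [walkLength_cons]
    rcases hd with hd | hd
    · subst hd
      simp only []
      have := dist_le_walkLength p
      have : dist a a = 0 := dist_self a
      have := dist_le_walkLength p
      simp [dist_self]
      linarith [dist_le_walkLength p]
    · have := ih hd
      have htri : dist a d.toProd.1 ≤ dist a c + dist c d.toProd.1 := dist_triangle _ _ _
      linarith

/-- Let t > 0. Let A_i ⊆ closedBall(a_i, r_i), B_i ⊆ closedBall(b_i, ρ_i),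
A_j ⊆ closedBall(a_j, r_j), B_j ⊆ closedBall(b_j, ρ_j) be nonempty subsets of a finite set
V ⊆ ℝ^d, and let G be a simple graph on V containing the edge {u, v} with u ∈ A_i and
v ∈ B_i. Let x ∈ A_j and y ∈ B_j. Suppose both
min(A_i, A_j) + dist(u, v) + min(B_i, B_j) > t·max(A_j, B_j) and
min(A_i, B_j) + dist(u, v) + min(B_i, A_j) > t·max(A_j, B_j).
Then every walk in G from x to y that traverses the edge {u, v} (in either direction) has
length strictly greater than t·dist(x, y); in particular, the edge {u, v} cannot be part
of a t-path between x and y. -/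
theorem stmt_8 (n : ℕ) (t : ℝ) (ht : 0 < t)
    (V : Finset (EuclideanSpace ℝ (Fin n)))
    (ai bi aj bj : EuclideanSpace ℝ (Fin n)) (ri ρi rj ρj : ℝ)
    (Ai Bi Aj Bj : Set (EuclideanSpace ℝ (Fin n)))
    (hAi : Ai.Nonempty) (hBi : Bi.Nonempty) (hAj : Aj.Nonempty) (hBj : Bj.Nonempty)
    (hAiV : Ai ⊆ ↑V) (hBiV : Bi ⊆ ↑V) (hAjV : Aj ⊆ ↑V) (hBjV : Bj ⊆ ↑V)
    (hAisub : Ai ⊆ Metric.closedBall ai ri) (hBisub : Bi ⊆ Metric.closedBall bi ρi)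
    (hAjsub : Aj ⊆ Metric.closedBall aj rj) (hBjsub : Bj ⊆ Metric.closedBall bj ρj)
    (G : SimpleGraph {p : EuclideanSpace ℝ (Fin n) // p ∈ V})
    (u v x y : {p : EuclideanSpace ℝ (Fin n) // p ∈ V})
    (huv : G.Adj u v) (hu : ↑u ∈ Ai) (hv : ↑v ∈ Bi) (hx : ↑x ∈ Aj) (hy : ↑y ∈ Bj)
    (hc1 : t * (dist aj bj + rj + ρj) <
      (dist ai aj - ri - rj) + dist u.val v.val + (dist bi bj - ρi - ρj))
    (hc2 : t * (dist aj bj + rj + ρj) <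
      (dist ai bj - ri - ρj) + dist u.val v.val + (dist bi aj - ρi - rj)) :
    ∀ w : G.Walk x y, s(u, v) ∈ w.edges → t * dist x.val y.val < walkLength w := by
  intro w hw
  -- membership facts
  have hua : dist u.val ai ≤ ri := Metric.mem_closedBall.mp (hAisub hu)
  have hvb : dist v.val bi ≤ ρi := Metric.mem_closedBall.mp (hBisub hv)
  have hxa : dist x.val aj ≤ rj := Metric.mem_closedBall.mp (hAjsub hx)
  have hyb : dist y.val bj ≤ ρj := Metric.mem_closedBall.mp (hBjsub hy)
  -- bound dist x y
  have hxy : dist x.val y.val ≤ rj + dist aj bj + ρj := by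
    calc dist x.val y.val ≤ dist x.val aj + dist aj y.val := dist_triangle _ _ _
      _ ≤ dist x.val aj + (dist aj bj + dist bj y.val) := by
          linarith [dist_triangle aj bj y.val]
      _ ≤ rj + dist aj bj + ρj := by rw [dist_comm bj y.val]; linarith
  have hty : t * dist x.val y.val ≤ t * (dist aj bj + rj + ρj) := by nlinarith
  -- find the dart
  rw [SimpleGraph.Walk.edges, List.mem_map] at hw
  obtain ⟨d, hd, hde⟩ := hw
  have hkey := dart_split w d hd
  have : s(d.toProd.1, d.toProd.2) = s(u, v) := hde
  rw [Sym2.eq_iff] at this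
  rcases this with ⟨h1, h2⟩ | ⟨h1, h2⟩
  · rw [h1, h2] at hkey
    -- dist x u ≥ dist ai aj - ri - rj
    have hxu : dist ai aj - ri - rj ≤ dist x.val u.val := by
      have := dist_triangle ai u.val aj
      have := dist_triangle u.val x.val aj
      rw [dist_comm u.val ai] at hua
      rw [dist_comm u.val x.val] at this
      linarith
    have hvy : dist bi bj - ρi - ρj ≤ dist v.val y.val := by
      have := dist_triangle bi v.val bj
      have := dist_triangle v.val y.val bj
      rw [dist_comm v.val bi] at hvb
      linarith
    have hd1 : dist x u = dist x.val u.val := Subtype.dist_eq x u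
    have hd2 : dist u v = dist u.val v.val := Subtype.dist_eq u v
    have hd3 : dist v y = dist v.val y.val := Subtype.dist_eq v y
    rw [hd1, hd2, hd3] at hkey
    linarith
  · rw [h1, h2] at hkey
    have hxv : dist bi aj - ρi - rj ≤ dist x.val v.val := by
      have := dist_triangle bi v.val aj
      have := dist_triangle v.val x.val aj
      rw [dist_comm v.val bi] at hvb
      rw [dist_comm v.val x.val] at this
      linarith
    have huy : dist ai bj - ri - ρj ≤ dist u.val y.val := by
      have := dist_triangle ai u.val bj
      have := dist_triangle u.val y.val bj
      rw [dist_comm u.val ai] at hua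
      linarith
    have hd1 : dist x v = dist x.val v.val := Subtype.dist_eq x v
    have hd2 : dist v u = dist v.val u.val := Subtype.dist_eq v u
    have hd3 : dist u y = dist u.val y.val := Subtype.dist_eq u y
    rw [hd1, hd2, hd3, dist_comm v.val u.val] at hkey
    linarith
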